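/- If a bipartite quantum state ρ on C^n ⊗ C^n is separable, then its realignment moments satisfy r_2(ρ)^2 ≤ r_3(ρ). -/

import Mathlib

open Matrix Kronecker
open scoped ComplexOrder

/-- The realignment `R(M)` of a matrix on `ℂ^n ⊗ ℂ^n`:
`R(M)_{(i,j),(k,l)} = M_{(i,k),(j,l)}`. -/
def realign {n : ℕ} (M : Matrix (Fin n × Fin n) (Fin n × Fin n) ℂ) :
    Matrix (Fin n × Fin n) (Fin n × Fin n) ℂ :=
  fun p q => M (p.1, q.1) (p.2, q.2)

/-- The `k`-th realignment moment `r_k(ρ) = Tr(Y^k)` where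
`Y = (R(ρ) R(ρ)†)^{1/2}` is the positive semidefinite square root. -/
noncomputable def rMoment {n : ℕ} (ρ : Matrix (Fin n × Fin n) (Fin n × Fin n) ℂ) (k : ℕ) : ℝ :=
  let hA := (Matrix.posSemidef_self_mul_conjTranspose (realign ρ)).1
  (((hA.eigenvectorUnitary.1 * diagonal (((↑) : ℝ → ℂ) ∘ (√·) ∘ hA.eigenvalues) *
      (star hA.eigenvectorUnitary : Matrix (Fin n × Fin n) (Fin n × Fin n) ℂ)) ^ k).trace).re

/-- A bipartite state on `ℂ^n ⊗ ℂ^n` is separable if it is a finite convex mixture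
of tensor products of (trace-one, positive semidefinite) states. -/
def SeparableState {n : ℕ} (ρ : Matrix (Fin n × Fin n) (Fin n × Fin n) ℂ) : Prop :=
  ∃ (T : ℕ) (p : Fin T → ℝ) (σ τ : Fin T → Matrix (Fin n) (Fin n) ℂ),
    (∀ t, 0 ≤ p t) ∧ (∑ t, p t = 1) ∧
    (∀ t, (σ t).PosSemidef ∧ (σ t).trace = 1) ∧
    (∀ t, (τ t).PosSemidef ∧ (τ t).trace = 1) ∧
    ρ = ∑ t, (p t : ℂ) • (σ t ⊗ₖ τ t)


namespace SepAux

variable {ι : Type*} [Fintype ι] [DecidableEq ι]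

lemma conj_pow (U D : Matrix ι ι ℂ) (hUV : U * star U = 1) (hVU : star U * U = 1) :
    ∀ k : ℕ, (U * D * star U) ^ k = U * D ^ k * star U
  | 0 => by simpa using hUV.symm
  | (k+1) => by
    rw [pow_succ, conj_pow U D hUV hVU k, pow_succ]
    simp only [Matrix.mul_assoc]
    rw [← Matrix.mul_assoc (star U) U, hVU, Matrix.one_mul]

lemma trace_conj_pow (U D : Matrix ι ι ℂ) (hUV : U * star U = 1) (hVU : star U * U = 1)
    (k : ℕ) : ((U * D * star U) ^ k).trace = (D ^ k).trace := by
  rw [conj_pow U D hUV hVU k, Matrix.trace_mul_cycle, hVU, Matrix.one_mul]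

lemma trace_pow {N : Matrix ι ι ℂ} (hN : N.IsHermitian) (k : ℕ) :
    (N ^ k).trace = ∑ i, (hN.eigenvalues i : ℂ) ^ k := by
  conv_lhs => rw [hN.spectral_theorem, Unitary.conjStarAlgAut_apply]
  rw [trace_conj_pow _ _ (Matrix.mem_unitaryGroup_iff.mp hN.eigenvectorUnitary.2)
      (Matrix.mem_unitaryGroup_iff'.mp hN.eigenvectorUnitary.2) k,
    Matrix.diagonal_pow, Matrix.trace_diagonal]
  simp [Function.comp]

lemma trace_pow_re {N : Matrix ι ι ℂ} (hN : N.IsHermitian) (k : ℕ) :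
    ((N ^ k).trace).re = ∑ i, hN.eigenvalues i ^ k := by
  rw [trace_pow hN k, Complex.re_sum]
  simp [← Complex.ofReal_pow]


/-- For a PSD matrix with trace 1, the squared Frobenius norm is at most 1. -/
lemma nsq_le_one {N : Matrix ι ι ℂ} (hN : N.PosSemidef) (hTr : N.trace = 1) :
    ∑ i, ∑ j, Complex.normSq (N i j) ≤ 1 := by
  have herm : Nᴴ = N := hN.1
  have h2 : ((N ^ 2).trace).re = ∑ i, hN.1.eigenvalues i ^ 2 := trace_pow_re hN.1 2
  have h1 : ∑ i, hN.1.eigenvalues i = 1 := by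
    have := trace_pow_re hN.1 1
    simp only [pow_one] at this
    rw [← this, hTr]
    simp
  have hfro : ((N ^ 2).trace).re = ∑ i, ∑ j, Complex.normSq (N i j) := by
    have : N ^ 2 = N * Nᴴ := by rw [herm, pow_two]
    rw [this, Matrix.trace, Complex.re_sum]
    congr 1
    ext i
    rw [Matrix.diag_apply, Matrix.mul_apply, Complex.re_sum]
    congr 1
    ext j
    rw [Matrix.conjTranspose_apply]
    simp [Complex.normSq_apply, Complex.mul_re, mul_comm]
  have hev : ∀ i, 0 ≤ hN.1.eigenvalues i := hN.eigenvalues_nonneg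
  calc ∑ i, ∑ j, Complex.normSq (N i j) = ∑ i, hN.1.eigenvalues i ^ 2 := by rw [← hfro, h2]
    _ ≤ (∑ i, hN.1.eigenvalues i) ^ 2 := by
        rw [sq]
        rw [show (∑ i, hN.1.eigenvalues i ^ 2) = ∑ i, hN.1.eigenvalues i * hN.1.eigenvalues i by
          simp [sq]]
        rw [Finset.sum_mul_sum]
        refine Finset.sum_le_sum fun i _ => ?_
        calc _ = hN.1.eigenvalues i * hN.1.eigenvalues i := rfl
          _ ≤ hN.1.eigenvalues i * ∑ j, hN.1.eigenvalues j :=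
            mul_le_mul_of_nonneg_left
              (Finset.single_le_sum (fun j _ => hev j) (Finset.mem_univ i)) (hev i)
          _ = ∑ j, hN.1.eigenvalues i * hN.1.eigenvalues j := Finset.mul_sum ..
    _ = 1 := by rw [h1]; norm_num

lemma sum_eig_sqrt_le_one {T : ℕ} (A : Matrix ι ι ℂ) (p : Fin T → ℝ) (u v : Fin T → ι → ℂ)
    (hp0 : ∀ t, 0 ≤ p t) (hp1 : ∑ t, p t = 1)
    (hu : ∀ t, ∑ q, Complex.normSq (u t q) ≤ 1)
    (hv : ∀ t, ∑ q, Complex.normSq (v t q) ≤ 1)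
    (hAeq : A = ∑ t, (p t : ℂ) • vecMulVec (u t) (v t)) :
    ∑ i, √((Matrix.posSemidef_self_mul_conjTranspose A).1.eigenvalues i) ≤ 1 := by
  set hH := Matrix.posSemidef_self_mul_conjTranspose A with hHdef
  set μ : ι → ℝ := fun i => √(hH.1.eigenvalues i) with hμdef
  set U : Matrix ι ι ℂ := (hH.1.eigenvectorUnitary : Matrix ι ι ℂ) with hUdef
  have hUV : U * star U = 1 := Matrix.mem_unitaryGroup_iff.mp hH.1.eigenvectorUnitary.2
  have hVU : star U * U = 1 := Matrix.mem_unitaryGroup_iff'.mp hH.1.eigenvectorUnitary.2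
  set CD : (ι → ℝ) → Matrix ι ι ℂ :=
    fun x => U * Matrix.diagonal ((RCLike.ofReal : ℝ → ℂ) ∘ x) * star U with hCDdef
  have hcancel : ∀ Z : Matrix ι ι ℂ, star U * (U * Z) = Z := fun Z => by
    rw [← Matrix.mul_assoc, hVU, Matrix.one_mul]
  have hdiagfun : ∀ x y : ι → ℝ, Matrix.diagonal ((RCLike.ofReal : ℝ → ℂ) ∘ x)
      * Matrix.diagonal ((RCLike.ofReal : ℝ → ℂ) ∘ y)
      = Matrix.diagonal ((RCLike.ofReal : ℝ → ℂ) ∘ fun i => x i * y i) := by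
    intro x y
    rw [Matrix.diagonal_mul_diagonal]
    refine congrArg Matrix.diagonal (funext fun i => ?_)
    simp only [Function.comp_apply]
    push_cast
    ring
  have hCDmul : ∀ x y, CD x * CD y = CD (fun i => x i * y i) := by
    intro x y
    simp only [hCDdef, Matrix.mul_assoc]
    rw [hcancel, ← Matrix.mul_assoc (Matrix.diagonal _), hdiagfun]
  set Y := CD μ with hYdef
  have hYspec : Y = CD μ := rfl
  have hAA : A * Aᴴ = Y * Y := by
    rw [hYspec, hCDmul]
    conv_lhs => rw [hH.1.spectral_theorem, Unitary.conjStarAlgAut_apply]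
    refine congrArg (fun D => U * Matrix.diagonal D * star U) (funext fun i => ?_)
    simp only [Function.comp_apply, hμdef, Real.mul_self_sqrt (hH.eigenvalues_nonneg i)]
  set g : ι → ℝ := fun i => if μ i = 0 then 0 else (μ i)⁻¹ with hgdef
  set e : ι → ℝ := fun i => if μ i = 0 then 0 else 1 with hedef
  set M := Aᴴ * CD g with hMdef
  have hstardiag : ∀ x : ι → ℝ, star (Matrix.diagonal ((RCLike.ofReal : ℝ → ℂ) ∘ x))
      = Matrix.diagonal ((RCLike.ofReal : ℝ → ℂ) ∘ x) := by
    intro x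
    rw [Matrix.star_eq_conjTranspose, Matrix.diagonal_conjTranspose]
    refine congrArg Matrix.diagonal (funext fun i => ?_)
    simp [RCLike.star_def, RCLike.conj_ofReal]
  have hCDherm : ∀ x, (CD x)ᴴ = CD x := by
    intro x
    rw [← Matrix.star_eq_conjTranspose, hCDdef]
    rw [Matrix.star_mul, Matrix.star_mul, star_star, hstardiag]
    simp only [Matrix.mul_assoc]
  have key1 : A * M = Y := by
    rw [hMdef, ← Matrix.mul_assoc, hAA, hYspec, hCDmul, hCDmul]
    refine congrArg CD (funext fun i => ?_)
    by_cases h : μ i = 0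
    · simp [hgdef, h]
    · simp only [hgdef, if_neg h]
      exact mul_inv_cancel_right₀ h _
  have key2 : Mᴴ * M = CD e := by
    have hMH : Mᴴ = CD g * A := by
      rw [hMdef, Matrix.conjTranspose_mul, Matrix.conjTranspose_conjTranspose, hCDherm]
    rw [hMH, hMdef, Matrix.mul_assoc, ← Matrix.mul_assoc A, hAA, hYspec, hCDmul, hCDmul, hCDmul]
    refine congrArg CD (funext fun i => ?_)
    by_cases h : μ i = 0
    · simp [hgdef, hedef, h]
    · simp only [hgdef, hedef, if_neg h]
      field_simp
  have hone : (1 : Matrix ι ι ℂ) = CD (fun _ => 1) := by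
    rw [hCDdef]
    have hf : ((RCLike.ofReal : ℝ → ℂ) ∘ fun _ : ι => (1:ℝ)) = fun _ : ι => (1:ℂ) := by
      funext i; simp
    dsimp only
    rw [hf, Matrix.diagonal_one, Matrix.mul_one, hUV]
  have hcontrPSD : ((1 : Matrix ι ι ℂ) - Mᴴ * M).PosSemidef := by
    rw [key2, hone]
    have hsub : CD (fun _ => (1:ℝ)) - CD e = CD (fun i => 1 - e i) := by
      simp only [hCDdef]
      rw [← Matrix.sub_mul, ← Matrix.mul_sub]
      have hd : Matrix.diagonal ((RCLike.ofReal : ℝ → ℂ) ∘ fun _ => (1:ℝ))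
          - Matrix.diagonal ((RCLike.ofReal : ℝ → ℂ) ∘ e)
          = Matrix.diagonal ((RCLike.ofReal : ℝ → ℂ) ∘ fun i => 1 - e i) := by
        rw [Matrix.diagonal_sub]
        refine congrArg Matrix.diagonal (funext fun i => ?_)
        simp only [Pi.sub_apply, Function.comp_apply]
        push_cast
        ring
      rw [hd]
    rw [hsub, hCDdef]
    have hdiag : (Matrix.diagonal ((RCLike.ofReal : ℝ → ℂ) ∘ fun i => 1 - e i)).PosSemidef := by
      refine Matrix.posSemidef_diagonal_iff.mpr fun i => ?_
      have : (0:ℝ) ≤ 1 - e i := by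
        rw [hedef]; by_cases h : μ i = 0 <;> simp [h]
      simpa using (RCLike.ofReal_nonneg (K := ℂ)).mpr this
    simpa [Matrix.star_eq_conjTranspose] using hdiag.mul_mul_conjTranspose_same U
  have hnsq : ∀ w : ι → ℂ, ((star w) ⬝ᵥ w).re = ∑ q, Complex.normSq (w q) := by
    intro w
    simp [dotProduct, Complex.re_sum, Complex.normSq_apply, Complex.mul_re]
  have hcontr : ∀ w : ι → ℂ, ∑ q, Complex.normSq ((M *ᵥ w) q) ≤ ∑ q, Complex.normSq (w q) := by
    intro w
    have h0 := hcontrPSD.dotProduct_mulVec_nonneg w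
    have h0re : 0 ≤ ((star w) ⬝ᵥ (((1 : Matrix ι ι ℂ) - Mᴴ * M) *ᵥ w)).re :=
      (Complex.le_def.mp h0).1
    have hexp : (star w) ⬝ᵥ (((1 : Matrix ι ι ℂ) - Mᴴ * M) *ᵥ w)
        = (star w) ⬝ᵥ w - (star (M *ᵥ w)) ⬝ᵥ (M *ᵥ w) := by
      rw [Matrix.sub_mulVec, dotProduct_sub, Matrix.one_mulVec]
      congr 1
      rw [Matrix.star_mulVec, Matrix.dotProduct_mulVec, ← Matrix.vecMul_vecMul, ← Matrix.dotProduct_mulVec]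
    rw [← hnsq, ← hnsq]
    have := hexp ▸ h0re
    rw [Complex.sub_re] at this
    linarith
  have htr : ∀ a b : ι → ℂ, (vecMulVec a b * M).trace = ∑ q, b q * (M *ᵥ a) q := by
    intro a b
    simp only [Matrix.trace, Matrix.diag_apply, Matrix.mul_apply, Matrix.vecMulVec_apply,
      Matrix.mulVec, dotProduct]
    rw [Finset.sum_comm]
    exact Finset.sum_congr rfl fun q _ => by
      rw [Finset.mul_sum]
      exact Finset.sum_congr rfl fun p _ => by ring
  have hCS : ∀ a b : ι → ℂ, (∑ q, Complex.normSq (a q)) ≤ 1 → (∑ q, Complex.normSq (b q)) ≤ 1 →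
      ((vecMulVec a b * M).trace).re ≤ 1 := by
    intro a b ha hb
    rw [htr a b]
    set w := M *ᵥ a with hwdef
    refine le_trans (Complex.re_le_norm _) ?_
    have h2 : ‖∑ q, b q * w q‖ ≤ ∑ q, ‖b q‖ * ‖w q‖ := by
      refine le_trans (norm_sum_le Finset.univ fun q => b q * w q) ?_
      refine le_of_eq (Finset.sum_congr rfl fun q _ => ?_)
      simp
    have h3 := Finset.sum_mul_sq_le_sq_mul_sq Finset.univ
      (fun q => ‖b q‖) (fun q => ‖w q‖)
    have hb2 : ∑ q, ‖b q‖ ^ 2 ≤ 1 := by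
      simpa [Complex.sq_norm] using hb
    have hw2 : ∑ q, ‖w q‖ ^ 2 ≤ 1 := by
      simp only [Complex.sq_norm]
      exact le_trans (hcontr a) ha
    have hsumnn : 0 ≤ ∑ q, ‖b q‖ * ‖w q‖ :=
      Finset.sum_nonneg fun q _ => mul_nonneg (norm_nonneg _) (norm_nonneg _)
    have hnn2 : (0:ℝ) ≤ ∑ q, ‖b q‖ ^ 2 :=
      Finset.sum_nonneg fun q _ => sq_nonneg _
    nlinarith [h2, h3, hb2, hw2, hsumnn, hnn2]
  -- put it together
  have hAM : ((A * M).trace).re ≤ 1 := by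
    have : (A * M).trace = ∑ t, (p t : ℂ) * (vecMulVec (u t) (v t) * M).trace := by
      rw [hAeq, Finset.sum_mul]
      rw [Matrix.trace_sum]
      exact Finset.sum_congr rfl fun t _ => by
        rw [Matrix.smul_mul, Matrix.trace_smul, smul_eq_mul]
    rw [this, Complex.re_sum]
    calc ∑ t, ((p t : ℂ) * (vecMulVec (u t) (v t) * M).trace).re
        ≤ ∑ t, p t := by
          refine Finset.sum_le_sum fun t _ => ?_
          rw [Complex.re_ofReal_mul]
          calc p t * ((vecMulVec (u t) (v t) * M).trace).re ≤ p t * 1 :=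
                mul_le_mul_of_nonneg_left (hCS (u t) (v t) (hu t) (hv t)) (hp0 t)
            _ = p t := mul_one _
      _ = 1 := hp1
  have hfin : ∑ i, μ i = ((A * M).trace).re := by
    rw [key1, hYspec, hCDdef]
    dsimp only
    rw [Matrix.trace_mul_cycle, hVU, Matrix.one_mul, Matrix.trace_diagonal, Complex.re_sum]
    simp
  linarith [hfin ▸ hAM]

end SepAux

/-- If a bipartite quantum state `ρ` on `ℂ^n ⊗ ℂ^n` is separable, then its
realignment moments satisfy `r_2(ρ)^2 ≤ r_3(ρ)`. -/
theorem separable_realignment_moments_r2_sq_le_r3 {n : ℕ} (hn : 1 ≤ n)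
    (ρ : Matrix (Fin n × Fin n) (Fin n × Fin n) ℂ)
    (hρ : ρ.PosSemidef) (hTr : ρ.trace = 1) (hsep : SeparableState ρ) :
    rMoment ρ 2 ^ 2 ≤ rMoment ρ 3 := by
  obtain ⟨T, p, σ, τ, hp0, hp1, hσ, hτ, hρeq⟩ := hsep
  set A := realign ρ with hAdef
  have hH := Matrix.posSemidef_self_mul_conjTranspose A
  set μ : Fin n × Fin n → ℝ := fun i => √(hH.1.eigenvalues i) with hμdef
  have hmom : ∀ k, rMoment ρ k = ∑ i, μ i ^ k := fun k => by
    unfold rMoment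
    dsimp only
    rw [SepAux.trace_conj_pow _ _ (Matrix.mem_unitaryGroup_iff.mp hH.1.eigenvectorUnitary.2)
      (Matrix.mem_unitaryGroup_iff'.mp hH.1.eigenvectorUnitary.2) k,
      Matrix.diagonal_pow, Matrix.trace_diagonal, Complex.re_sum]
    simp [Function.comp, hμdef, ← Complex.ofReal_pow]
  have hμ0 : ∀ i, 0 ≤ μ i := fun i => Real.sqrt_nonneg _
  -- the decomposition of the realignment into rank-one pieces
  have hAeq : A = ∑ t, (p t : ℂ) • vecMulVec (fun q : Fin n × Fin n => σ t q.1 q.2)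
      (fun q : Fin n × Fin n => τ t q.1 q.2) := by
    funext pq qr
    rw [hAdef]
    show ρ (pq.1, qr.1) (pq.2, qr.2) = _
    rw [hρeq]
    simp only [Finset.sum_apply, Matrix.sum_apply, Matrix.smul_apply, Matrix.vecMulVec_apply,
      Matrix.kroneckerMap_apply, smul_eq_mul]
  have hr1 : ∑ i, μ i ≤ 1 := by
    refine SepAux.sum_eig_sqrt_le_one A p _ _ hp0 hp1 (fun t => ?_) (fun t => ?_) hAeq
    · calc ∑ q : Fin n × Fin n, Complex.normSq (σ t q.1 q.2)
          = ∑ i, ∑ j, Complex.normSq (σ t i j) := by rw [Fintype.sum_prod_type]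
        _ ≤ 1 := SepAux.nsq_le_one (hσ t).1 (hσ t).2
    · calc ∑ q : Fin n × Fin n, Complex.normSq (τ t q.1 q.2)
          = ∑ i, ∑ j, Complex.normSq (τ t i j) := by rw [Fintype.sum_prod_type]
        _ ≤ 1 := SepAux.nsq_le_one (hτ t).1 (hτ t).2
  -- Cauchy-Schwarz on eigenvalues
  have hCS : (∑ i, μ i ^ 2) ^ 2 ≤ (∑ i, μ i) * (∑ i, μ i ^ 3) := by
    have h := Finset.sum_mul_sq_le_sq_mul_sq Finset.univ
      (fun i => Real.sqrt (μ i)) (fun i => Real.sqrt (μ i) * μ i)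
    have h1 : ∀ i, Real.sqrt (μ i) * (Real.sqrt (μ i) * μ i) = μ i ^ 2 := fun i => by
      rw [← mul_assoc, Real.mul_self_sqrt (hμ0 i)]; ring
    have h2 : ∀ i, Real.sqrt (μ i) ^ 2 = μ i := fun i => Real.sq_sqrt (hμ0 i)
    have h3 : ∀ i, (Real.sqrt (μ i) * μ i) ^ 2 = μ i ^ 3 := fun i => by
      rw [mul_pow, Real.sq_sqrt (hμ0 i)]; ring
    simp only [h1, h2, h3] at h
    exact h
  have h3nn : 0 ≤ ∑ i, μ i ^ 3 := Finset.sum_nonneg fun i _ => pow_nonneg (hμ0 i) 3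
  rw [hmom 2, hmom 3]
  calc (∑ i, μ i ^ 2) ^ 2 ≤ (∑ i, μ i) * (∑ i, μ i ^ 3) := hCS
    _ ≤ 1 * (∑ i, μ i ^ 3) := mul_le_mul_of_nonneg_right hr1 h3nn
    _ = ∑ i, μ i ^ 3 := one_mul _
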